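/- arXiv:1311.5392 — 2 statements merged into one kernel-verified Lean document; each statement's English description precedes it below -/
import Mathlib

section
/- For every A ∈ ℝ and B ≥ 0 one has 𝓘₂²(A,B) ≥ 0, i.e. ∫₀^π cos(2θ) φ₂(A + B cos θ) dθ ≥ 0, with equality when B = 0. -/
/-!
Integrating by parts, `φ₂(x) = ∫₀^∞ log (1 + e^{x-t}) dt` is an integral of translates of
the convex softplus function, so `φ₂` is convex, and so is `G c = φ₂ (A + B c)`. For convex
`G` the even part `G c + G (-c)` is nondecreasing in `|c|`. Folding the integral
`∫₀^π cos 2θ G (cos θ) dθ` under `θ ↦ π - θ` and then `θ ↦ π/2 - θ` turns it into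
`∫₀^{π/4} cos 2θ ((G (cos θ) + G (-cos θ)) - (G (sin θ) + G (-sin θ))) dθ`,
whose integrand is nonnegative because `0 ≤ sin θ ≤ cos θ` there.
-/

open MeasureTheory Set

/-- The Fermi integral of order `s`: `φ_s(x) = (1/Γ(s)) ∫₀^∞ t^{s-1}/(e^{t-x}+1) dt`. -/
noncomputable def fermi (s x : ℝ) : ℝ :=
  (1 / Real.Gamma s) * ∫ t in Set.Ioi (0 : ℝ), t ^ (s - 1) / (Real.exp (t - x) + 1)

/-- `𝓘_N^s(A,B) = (1/π) ∫₀^π cos(Nθ) φ_s(A + B cos θ) dθ`. -/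
noncomputable def calI (N : ℕ) (s A B : ℝ) : ℝ :=
  (1 / Real.pi) * ∫ θ in (0 : ℝ)..Real.pi, Real.cos (N * θ) * fermi s (A + B * Real.cos θ)

open Real Filter Topology

noncomputable def softplus (x : ℝ) : ℝ := log (1 + exp x)

theorem softplus_nonneg (x : ℝ) : 0 ≤ softplus x :=
  log_nonneg (by linarith [exp_pos x])

theorem softplus_le_exp (x : ℝ) : softplus x ≤ exp x := by
  have := log_le_sub_one_of_pos (by positivity : 0 < 1 + exp x)
  rw [softplus]
  linarith

theorem hasDerivAt_softplus (x : ℝ) : HasDerivAt softplus (sigmoid x) x := by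
  refine (((hasDerivAt_exp x).const_add 1).log (by positivity)).congr_deriv ?_
  rw [sigmoid_def, exp_neg]
  field_simp
  ring

theorem convexOn_softplus : ConvexOn ℝ univ softplus := by
  refine Monotone.convexOn_univ_of_deriv (fun x => (hasDerivAt_softplus x).differentiableAt) ?_
  rw [funext fun x => (hasDerivAt_softplus x).deriv]
  exact sigmoid_monotone

theorem continuous_softplus : Continuous softplus :=
  continuous_iff_continuousAt.2 fun x => (hasDerivAt_softplus x).continuousAt

theorem integrableOn_softplus_sub (x c : ℝ) :
    IntegrableOn (fun t => softplus (x - t)) (Ioi c) := by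
  refine ((integrableOn_exp_neg_Ioi c).const_mul (exp x)).mono'
    (continuous_softplus.comp (continuous_sub_left x)).aestronglyMeasurable
    (ae_of_all _ fun t => ?_)
  rw [norm_of_nonneg (softplus_nonneg _), ← exp_add, ← sub_eq_add_neg]
  exact softplus_le_exp _

theorem sigmoid_le_exp (x : ℝ) : sigmoid x ≤ exp x :=
  calc sigmoid x = sigmoid x * exp (-x) * exp x := by
        rw [mul_assoc, ← exp_add, neg_add_cancel, exp_zero, mul_one]
    _ = sigmoid (-x) * exp x := by rw [sigmoid_mul_rexp_neg]
    _ ≤ 1 * exp x := by gcongr; exact sigmoid_le_one _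
    _ = exp x := one_mul _

theorem fermi_two_eq_integral_mul_sigmoid (x : ℝ) :
    fermi 2 x = ∫ t in Ioi (0 : ℝ), t * sigmoid (x - t) := by
  rw [fermi, Gamma_two]
  norm_num only [one_mul, rpow_one, sigmoid_def, neg_sub, add_comm (1 : ℝ), div_eq_mul_inv]

theorem integrableOn_mul_sigmoid_sub (x : ℝ) :
    IntegrableOn (fun t => t * sigmoid (x - t)) (Ioi 0) := by
  have hΓ : IntegrableOn (fun t => exp (-t) * t ^ ((2 : ℝ) - 1)) (Ioi 0) :=
    GammaIntegral_convergent two_pos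
  refine (hΓ.const_mul (exp x)).mono' (by fun_prop) ?_
  filter_upwards [ae_restrict_mem measurableSet_Ioi] with t (ht : 0 < t)
  rw [norm_of_nonneg (mul_nonneg ht.le (sigmoid_nonneg _)), show (2 : ℝ) - 1 = 1 by norm_num,
    rpow_one, ← mul_assoc, ← exp_add, ← sub_eq_add_neg, mul_comm]
  exact mul_le_mul_of_nonneg_right (sigmoid_le_exp _) ht.le

theorem tendsto_mul_softplus_sub_atTop (x : ℝ) :
    Tendsto (fun t => t * softplus (x - t)) atTop (𝓝 0) := by
  have hlim : Tendsto (fun t => exp x * (t ^ 1 * exp (-t))) atTop (𝓝 0) := by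
    simpa using (tendsto_pow_mul_exp_neg_atTop_nhds_zero 1).const_mul (exp x)
  refine squeeze_zero' ?_ ?_ hlim <;> filter_upwards [eventually_ge_atTop 0] with t ht
  · exact mul_nonneg ht (softplus_nonneg _)
  · rw [pow_one, mul_left_comm, ← exp_add, ← sub_eq_add_neg]
    exact mul_le_mul_of_nonneg_left (softplus_le_exp _) ht

theorem fermi_two_eq_integral_softplus (x : ℝ) :
    fermi 2 x = ∫ t in Ioi (0 : ℝ), softplus (x - t) := by
  have hderiv : ∀ t ∈ Ici (0 : ℝ), HasDerivAt (fun t => -(t * softplus (x - t)))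
      (t * sigmoid (x - t) - softplus (x - t)) t := fun t _ =>
    (((hasDerivAt_id' t).mul ((hasDerivAt_softplus (x - t)).comp t
      ((hasDerivAt_id' t).const_sub x))).neg).congr_deriv (by simp only [Function.comp_apply]; ring)
  have hparts := integral_Ioi_of_hasDerivAt_of_tendsto' hderiv
    ((integrableOn_mul_sigmoid_sub x).sub (integrableOn_softplus_sub x 0))
    (by simpa using (tendsto_mul_softplus_sub_atTop x).neg)
  rw [integral_sub (integrableOn_mul_sigmoid_sub x) (integrableOn_softplus_sub x 0)] at hparts
  rw [fermi_two_eq_integral_mul_sigmoid]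
  simpa [sub_eq_zero] using hparts

theorem convexOn_integral {α E : Type*} [MeasurableSpace α] [AddCommGroup E] [Module ℝ E]
    {μ : Measure α} {s : Set E} {F : α → E → ℝ} (hs : Convex ℝ s)
    (hF : ∀ t, ConvexOn ℝ s (F t)) (hint : ∀ x ∈ s, Integrable (fun t => F t x) μ) :
    ConvexOn ℝ s (fun x => ∫ t, F t x ∂μ) := by
  refine ⟨hs, fun x hx y hy a b ha hb hab => ?_⟩
  simp only [smul_eq_mul]
  rw [← integral_const_mul, ← integral_const_mul,
    ← integral_add ((hint x hx).const_mul a) ((hint y hy).const_mul b)]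
  exact integral_mono (hint _ (hs hx hy ha hb hab))
    (((hint x hx).const_mul a).add ((hint y hy).const_mul b))
    fun t => (hF t).2 hx hy ha hb hab

theorem convexOn_fermi_two : ConvexOn ℝ univ (fermi 2) := by
  rw [funext fermi_two_eq_integral_softplus]
  refine convexOn_integral convex_univ (fun t => ?_) fun x _ => integrableOn_softplus_sub x 0
  simpa [Function.comp_def, neg_add_eq_sub] using convexOn_softplus.translate_right (-t)

theorem ConvexOn.map_add_add_map_sub_le {s : Set ℝ} {f : ℝ → ℝ} (hf : ConvexOn ℝ s f)
    {x a b : ℝ} (hxb : x + b ∈ s) (hxb' : x - b ∈ s) (ha : 0 ≤ a) (hab : a ≤ b) :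
    f (x + a) + f (x - a) ≤ f (x + b) + f (x - b) := by
  rcases (ha.trans hab).eq_or_lt with rfl | hb
  · rw [le_antisymm hab ha]
  have hsum : (b + a) / (2 * b) + (b - a) / (2 * b) = 1 := by field_simp; ring
  have hp : 0 ≤ (b + a) / (2 * b) := by positivity
  have hm : 0 ≤ (b - a) / (2 * b) := div_nonneg (by linarith) (by positivity)
  have h₁ := hf.2 hxb hxb' hp hm hsum
  have h₂ := hf.2 hxb hxb' hm hp (by linarith)
  simp only [smul_eq_mul] at h₁ h₂
  have e₁ : (b + a) / (2 * b) * (x + b) + (b - a) / (2 * b) * (x - b) = x + a := by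
    field_simp; ring
  have e₂ : (b - a) / (2 * b) * (x + b) + (b + a) / (2 * b) * (x - b) = x - a := by
    field_simp; ring
  rw [e₁] at h₁
  rw [e₂] at h₂
  linear_combination h₁ + h₂ + (f (x + b) + f (x - b)) * hsum

theorem intervalIntegral.integral_eq_integral_add_comp_sub {g : ℝ → ℝ} {a : ℝ}
    (hg : IntervalIntegrable g volume 0 a) :
    ∫ θ in (0 : ℝ)..a, g θ = ∫ θ in (0 : ℝ)..a / 2, (g θ + g (a - θ)) := by
  have hmid : a / 2 ∈ uIcc 0 a := by
    rcases le_total 0 a with h | h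
    · rw [uIcc_of_le h]; constructor <;> linarith
    · rw [uIcc_of_ge h]; constructor <;> linarith
  have hleft : IntervalIntegrable g volume 0 (a / 2) := hg.mono_set (uIcc_subset_uIcc_left hmid)
  have hright : IntervalIntegrable g volume (a / 2) a :=
    hg.mono_set (uIcc_subset_uIcc_right hmid)
  have hreflect : ∫ θ in (0 : ℝ)..a / 2, g (a - θ) = ∫ θ in a / 2..a, g θ := by
    rw [intervalIntegral.integral_comp_sub_left, sub_zero, sub_half]
  have hleft' : IntervalIntegrable (fun θ => g (a - θ)) volume 0 (a / 2) := by
    simpa [sub_half] using (hright.comp_sub_left a).symm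
  rw [intervalIntegral.integral_add hleft hleft', hreflect,
    intervalIntegral.integral_add_adjacent_intervals hleft hright]

theorem integral_cos_two_mul_mul_comp_cos {G : ℝ → ℝ} (hG : Continuous G) :
    ∫ θ in (0 : ℝ)..π, cos (2 * θ) * G (cos θ) =
      ∫ θ in (0 : ℝ)..π / 4,
        cos (2 * θ) * ((G (cos θ) + G (-cos θ)) - (G (sin θ) + G (-sin θ))) := by
  have hfold_pi : ∫ θ in (0 : ℝ)..π, cos (2 * θ) * G (cos θ) =
      ∫ θ in (0 : ℝ)..π / 2, cos (2 * θ) * (G (cos θ) + G (-cos θ)) := by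
    rw [intervalIntegral.integral_eq_integral_add_comp_sub
      ((by fun_prop : Continuous fun θ => cos (2 * θ) * G (cos θ)).intervalIntegrable _ _)]
    refine intervalIntegral.integral_congr fun θ _ => ?_
    simp only [cos_pi_sub, mul_sub, cos_two_pi_sub]
    ring
  have hcont : Continuous fun θ => cos (2 * θ) * (G (cos θ) + G (-cos θ)) := by fun_prop
  rw [hfold_pi, intervalIntegral.integral_eq_integral_add_comp_sub (hcont.intervalIntegrable _ _),
    show π / 2 / 2 = π / 4 by ring]
  refine intervalIntegral.integral_congr fun θ _ => ?_
  simp only [cos_pi_div_two_sub, mul_sub, show 2 * (π / 2) = π by ring, cos_pi_sub]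
  ring

theorem sin_le_cos_of_mem_Icc {θ : ℝ} (hθ : θ ∈ Icc 0 (π / 4)) : sin θ ≤ cos θ := by
  have hsin : sin θ ≤ sin (π / 4) :=
    sin_le_sin_of_le_of_le_pi_div_two (by linarith [hθ.1, pi_pos]) (by linarith [pi_pos]) hθ.2
  have hcos : cos (π / 4) ≤ cos θ :=
    cos_le_cos_of_nonneg_of_le_pi hθ.1 (by linarith [pi_pos]) hθ.2
  rw [sin_pi_div_four] at hsin
  rw [cos_pi_div_four] at hcos
  linarith

theorem ConvexOn.integral_cos_two_mul_mul_comp_cos_nonneg {G : ℝ → ℝ}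
    (hG : ConvexOn ℝ univ G) : 0 ≤ ∫ θ in (0 : ℝ)..π, cos (2 * θ) * G (cos θ) := by
  rw [integral_cos_two_mul_mul_comp_cos (continuousOn_univ.1 (hG.continuousOn isOpen_univ))]
  refine intervalIntegral.integral_nonneg (by positivity) fun θ hθ => mul_nonneg ?_ ?_
  · exact cos_nonneg_of_mem_Icc ⟨by linarith [hθ.1, pi_pos], by linarith [hθ.2]⟩
  · have hsin : 0 ≤ sin θ := sin_nonneg_of_nonneg_of_le_pi hθ.1 (by linarith [hθ.2, pi_pos])
    have hsym := hG.map_add_add_map_sub_le (x := 0) (mem_univ _) (mem_univ _) hsin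
      (sin_le_cos_of_mem_Icc hθ)
    simp only [zero_add, zero_sub] at hsym
    linarith

theorem ConvexOn.comp_const_add_mul {f : ℝ → ℝ} (hf : ConvexOn ℝ univ f) (A B : ℝ) :
    ConvexOn ℝ univ fun c => f (A + B * c) := by
  simpa [Function.comp_def] using (hf.translate_right A).comp_linearMap (LinearMap.mulLeft ℝ B)

theorem calI_two_nonneg_general (A B : ℝ) :
    0 ≤ calI 2 2 A B ∧
    0 ≤ ∫ θ in (0 : ℝ)..Real.pi, Real.cos (2 * θ) * fermi 2 (A + B * Real.cos θ) ∧
    (B = 0 → calI 2 2 A B = 0) := by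
  have hcalI : calI 2 2 A B =
      1 / π * ∫ θ in (0 : ℝ)..π, cos (2 * θ) * fermi 2 (A + B * cos θ) := by
    simp only [calI, Nat.cast_ofNat]
  have hint := (convexOn_fermi_two.comp_const_add_mul A B).integral_cos_two_mul_mul_comp_cos_nonneg
  refine ⟨hcalI ▸ by positivity, hint, ?_⟩
  rintro rfl
  simp [calI, intervalIntegral.integral_comp_mul_left]

/-- `𝓘₂²(A,B) ≥ 0`, i.e. `∫₀^π cos(2θ) φ₂(A + B cos θ) dθ ≥ 0`, with equality at `B = 0`. -/
theorem calI_two_nonneg (A B : ℝ) (hB : 0 ≤ B) :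
    0 ≤ calI 2 2 A B ∧
    0 ≤ ∫ θ in (0 : ℝ)..Real.pi, Real.cos (2 * θ) * fermi 2 (A + B * Real.cos θ) ∧
    (B = 0 → calI 2 2 A B = 0) :=
  calI_two_nonneg_general A B
end

section
/- As ψ → 0⁺ one has ( 𝓕₀¹(ψ) + 𝓕₂¹(ψ) ) / ( 2 √(2 𝓕₀²(ψ)) ) = 1/2 − ψ²/8 + O(ψ⁴) and ( 𝓕₀¹(ψ) − 𝓕₂¹(ψ) ) / ( 2 √(2 𝓕₀²(ψ)) ) = 1/2 − ψ²/8 + O(ψ⁴). -/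
/-! For `ψ ≤ π/4` the integrals run over `[0, π]`, where `∫₀^π cos(kθ) dθ = 0` for `k ≥ 1`;
expanding the integrands in `cos(kθ)` gives `𝓕₀¹ = cos ψ`, `𝓕₂¹ = 0` and
`𝓕₀² = (1 + cos²ψ)/4`. Both quotients therefore equal `x = c/√(2(1 + c²))` with `c = cos ψ`, and
`x² - ((1 + c)/4)² = -(1 - c)²(c² + 4c + 1)/(16(1 + c²))` gives `x = (1 + c)/4 + O((1 - c)²)`.
Since `1 - c = O(ψ²)` and `c = 1 - ψ²/2 + O(ψ⁴)`, this is `1/2 - ψ²/8 + O(ψ⁴)`. -/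

open MeasureTheory Set Filter Asymptotics

/-- `C(ψ) = π` for `0 ≤ ψ ≤ π/4`, `C(ψ) = arccos(-cot ψ)` for `π/4 < ψ < 3π/4`. -/
noncomputable def Cpsi (ψ : ℝ) : ℝ :=
  if ψ ≤ Real.pi / 4 then Real.pi else Real.arccos (-(Real.cos ψ / Real.sin ψ))

/-- `𝓕_N^s(ψ) = (1/(πΓ(s+1))) ∫₀^{C(ψ)} cos(Nθ)(cos ψ + sin ψ cos θ)^s dθ`. -/
noncomputable def calF (N : ℕ) (s ψ : ℝ) : ℝ :=
  (1 / (Real.pi * Real.Gamma (s + 1))) *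
    ∫ θ in (0 : ℝ)..Cpsi ψ, Real.cos (N * θ) * (Real.cos ψ + Real.sin ψ * Real.cos θ) ^ s

/-- `u(ψ) = 𝓕₁²(ψ)/𝓕₀²(ψ)`. -/
noncomputable def uFun (ψ : ℝ) : ℝ := calF 1 2 ψ / calF 0 2 ψ

/-- `Y(ψ) = (𝓕₀²(ψ)+𝓕₂²(ψ))/(2𝓕₀²(ψ))`. -/
noncomputable def Yfun (ψ : ℝ) : ℝ := (calF 0 2 ψ + calF 2 2 ψ) / (2 * calF 0 2 ψ)

/-- `Z(ψ) = (𝓕₀¹(ψ)-𝓕₂¹(ψ))/(2√(2𝓕₀²(ψ)))`. -/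
noncomputable def Zfun (ψ : ℝ) : ℝ :=
  (calF 0 1 ψ - calF 2 1 ψ) / (2 * Real.sqrt (2 * calF 0 2 ψ))

/-- `Z_⊥(ψ) = (𝓕₀¹(ψ)+𝓕₂¹(ψ))/(2√(2𝓕₀²(ψ)))`. -/
noncomputable def Zperp (ψ : ℝ) : ℝ :=
  (calF 0 1 ψ + calF 2 1 ψ) / (2 * Real.sqrt (2 * calF 0 2 ψ))

open Real intervalIntegral Topology

lemma Cpsi_of_le {ψ : ℝ} (h : ψ ≤ π / 4) : Cpsi ψ = π := if_pos h

lemma integral_cos_nat_mul_eq_zero {k : ℕ} (hk : k ≠ 0) : ∫ θ in (0 : ℝ)..π, cos (k * θ) = 0 := by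
  have hk' : (k : ℝ) ≠ 0 := Nat.cast_ne_zero.2 hk
  rw [integral_comp_mul_left (fun x => cos x) hk', integral_cos, sin_nat_mul_pi]
  simp

lemma integral_sum_mul_cos_nat_mul {n : ℕ} (a : Fin (n + 1) → ℝ) :
    ∫ θ in (0 : ℝ)..π, ∑ k, a k * cos (k * θ) = π * a 0 := by
  have hvanish (k : Fin n) : ∫ θ in (0 : ℝ)..π, a k.succ * cos ((k.succ : ℕ) * θ) = 0 := by
    rw [intervalIntegral.integral_const_mul,
      integral_cos_nat_mul_eq_zero (Fin.val_ne_zero_iff.2 k.succ_ne_zero), mul_zero]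
  rw [integral_finsetSum fun k _ => (by fun_prop : Continuous _).intervalIntegrable _ _,
    Fin.sum_univ_succ, Finset.sum_eq_zero fun k _ => hvanish k]
  simp [mul_comm]

lemma calF_zero_one {ψ : ℝ} (h : ψ ≤ π / 4) : calF 0 1 ψ = cos ψ := by
  have hint : (fun θ => cos ((0 : ℕ) * θ) * (cos ψ + sin ψ * cos θ) ^ (1 : ℝ))
      = fun θ => ∑ k : Fin 2, ![cos ψ, sin ψ] k * cos (k * θ) := by
    ext θ; simp
  rw [calF, Cpsi_of_le h, hint, integral_sum_mul_cos_nat_mul]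
  norm_num [Gamma_two]

lemma calF_two_one {ψ : ℝ} (h : ψ ≤ π / 4) : calF 2 1 ψ = 0 := by
  have hint : (fun θ => cos ((2 : ℕ) * θ) * (cos ψ + sin ψ * cos θ) ^ (1 : ℝ))
      = fun θ => ∑ k : Fin 4, ![0, sin ψ / 2, cos ψ, sin ψ / 2] k * cos (k * θ) := by
    ext θ
    simp [Fin.sum_univ_four]
    rw [cos_two_mul, cos_three_mul]
    ring
  rw [calF, Cpsi_of_le h, hint, integral_sum_mul_cos_nat_mul]
  simp

lemma calF_zero_two {ψ : ℝ} (h : ψ ≤ π / 4) : calF 0 2 ψ = (1 + cos ψ ^ 2) / 4 := by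
  have hint : (fun θ => cos ((0 : ℕ) * θ) * (cos ψ + sin ψ * cos θ) ^ (2 : ℝ))
      = fun θ => ∑ k : Fin 3,
          ![cos ψ ^ 2 + sin ψ ^ 2 / 2, 2 * cos ψ * sin ψ, sin ψ ^ 2 / 2] k * cos (k * θ) := by
    ext θ
    simp [Fin.sum_univ_three]
    rw [cos_two_mul]
    ring
  have hΓ : Gamma (2 + 1) = 2 := by rw [Gamma_add_one two_ne_zero, Gamma_two, mul_one]
  rw [calF, Cpsi_of_le h, hint, integral_sum_mul_cos_nat_mul, hΓ, Matrix.cons_val_zero, sin_sq]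
  field_simp
  ring

lemma abs_sub_le_abs_sq_sub_sq_div {x y : ℝ} (hx : 0 ≤ x) (hy : 0 < y) :
    |x - y| ≤ |x ^ 2 - y ^ 2| / y := by
  rw [le_div_iff₀ hy, sq_sub_sq, abs_mul, abs_of_pos (by linarith : 0 < x + y), mul_comm]
  exact mul_le_mul_of_nonneg_right (by linarith) (abs_nonneg _)

lemma abs_div_sqrt_sub_le {c : ℝ} (hc : 0 ≤ c) :
    |c / (2 * √(2 * ((1 + c ^ 2) / 4))) - (1 + c) / 4| ≤ 3 / 4 * (1 - c) ^ 2 := by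
  set x := c / (2 * √(2 * ((1 + c ^ 2) / 4)))
  have hx2 : x ^ 2 = c ^ 2 / (2 * (1 + c ^ 2)) := by
    rw [div_pow, mul_pow, sq_sqrt (by positivity)]
    ring
  have hsq : x ^ 2 - ((1 + c) / 4) ^ 2
      = -((1 - c) ^ 2 * (c ^ 2 + 4 * c + 1)) / (16 * (1 + c ^ 2)) := by
    rw [hx2]
    field_simp
    ring
  calc |x - (1 + c) / 4| ≤ |x ^ 2 - ((1 + c) / 4) ^ 2| / ((1 + c) / 4) :=
        abs_sub_le_abs_sq_sub_sq_div (by positivity) (by positivity)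
    _ = (1 - c) ^ 2 * (c ^ 2 + 4 * c + 1) / (4 * (1 + c) * (1 + c ^ 2)) := by
        rw [hsq, abs_div, abs_neg, abs_of_nonneg (by positivity), abs_of_pos (by positivity)]
        field_simp
        ring
    _ ≤ 3 / 4 * (1 - c) ^ 2 := by
        rw [div_le_iff₀ (by positivity)]
        have hpoly : c ^ 2 + 4 * c + 1 ≤ 3 * (1 + c) * (1 + c ^ 2) := by
          nlinarith [sq_nonneg (c - 1 / 4), pow_nonneg hc 3]
        nlinarith [mul_le_mul_of_nonneg_left hpoly (sq_nonneg (1 - c))]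

lemma isBigO_one_sub_cos : (fun x => 1 - cos x) =O[𝓝 0] fun x => x ^ 2 :=
  IsBigO.of_bound (1 / 2) <| Eventually.of_forall fun x => by
    rw [norm_of_nonneg (sub_nonneg.2 (cos_le_one x)), norm_pow, norm_eq_abs, sq_abs]
    linarith [one_sub_sq_div_two_le_cos (x := x)]

lemma isBigO_cos_sub_one_add_sq_div_two :
    (fun x => cos x - (1 - x ^ 2 / 2)) =O[𝓝 0] fun x => x ^ 4 :=
  IsBigO.of_bound (5 / 96) <| by
    filter_upwards [Metric.closedBall_mem_nhds (0 : ℝ) one_pos] with x hx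
    rw [Metric.mem_closedBall, dist_zero_right] at hx
    rw [norm_eq_abs, norm_pow, norm_eq_abs, mul_comm]
    exact cos_bound hx

lemma isBigO_cos_div_sqrt_sub :
    (fun ψ => cos ψ / (2 * √(2 * ((1 + cos ψ ^ 2) / 4))) - (1 / 2 - ψ ^ 2 / 8))
      =O[𝓝 0] fun ψ => ψ ^ 4 := by
  have hcos : ∀ᶠ ψ in 𝓝 (0 : ℝ), 0 ≤ cos ψ := by
    filter_upwards [Icc_mem_nhds (neg_lt_zero.2 (half_pos pi_pos)) (half_pos pi_pos)] with ψ hψ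
    exact cos_nonneg_of_mem_Icc hψ
  have hnear : (fun ψ => cos ψ / (2 * √(2 * ((1 + cos ψ ^ 2) / 4))) - (1 + cos ψ) / 4)
      =O[𝓝 0] fun ψ => (1 - cos ψ) ^ 2 :=
    IsBigO.of_bound (3 / 4) <| by
      filter_upwards [hcos] with ψ hψ
      rw [norm_eq_abs, norm_of_nonneg (sq_nonneg _)]
      exact abs_div_sqrt_sub_le hψ
  have hsq : (fun ψ => (1 - cos ψ) ^ 2) =O[𝓝 0] fun ψ => ψ ^ 4 := by
    simpa only [← pow_mul] using isBigO_one_sub_cos.pow 2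
  exact ((hnear.trans hsq).add (isBigO_cos_sub_one_add_sq_div_two.const_mul_left (1 / 4))).congr
    (fun ψ => by ring) fun _ => rfl

/-- As `ψ → 0⁺`: `(𝓕₀¹ ± 𝓕₂¹)/(2√(2𝓕₀²)) = 1/2 - ψ²/8 + O(ψ⁴)`. -/
theorem calF_Z_expansion_at_zero :
    ((fun ψ => (calF 0 1 ψ + calF 2 1 ψ) / (2 * Real.sqrt (2 * calF 0 2 ψ))
        - (1 / 2 - ψ ^ 2 / 8)) =O[nhdsWithin 0 (Set.Ioi 0)] fun ψ => ψ ^ 4) ∧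
    ((fun ψ => (calF 0 1 ψ - calF 2 1 ψ) / (2 * Real.sqrt (2 * calF 0 2 ψ))
        - (1 / 2 - ψ ^ 2 / 8)) =O[nhdsWithin 0 (Set.Ioi 0)] fun ψ => ψ ^ 4) := by
  have hclosed : ∀ᶠ ψ in 𝓝[>] 0,
      calF 0 1 ψ = cos ψ ∧ calF 2 1 ψ = 0 ∧ calF 0 2 ψ = (1 + cos ψ ^ 2) / 4 := by
    filter_upwards [nhdsWithin_le_nhds (eventually_le_nhds (by positivity : (0 : ℝ) < π / 4))]
      with ψ hψ
    exact ⟨calF_zero_one hψ, calF_two_one hψ, calF_zero_two hψ⟩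
  have hZ := isBigO_cos_div_sqrt_sub.mono (nhdsWithin_le_nhds (s := Ioi 0))
  constructor <;>
    exact hZ.congr' (hclosed.mono fun ψ ⟨h01, h21, h02⟩ => by simp [h01, h21, h02]) .rfl
end
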